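/- arXiv:2112.10772 — 2 statements merged into one kernel-verified Lean document; each statement's English description precedes it below -/
import Mathlib

section
/- For every bounded continuous function f : ℝ → ℝ, the function x ↦ (p*f)(x) is twice differentiable on ℝ and satisfies (p*f)''(x) = (p*f)(x) − f(x) for all x ∈ ℝ; that is, u = p*f solves u − u'' = f. -/
open MeasureTheory Real Set

/-- The convolution `(p*f)(x) = ∫_ℝ (1/2) e^{-|x-y|} f(y) dy` with `p(x) = (1/2)exp(-|x|)`. -/
noncomputable def pConv (f : ℝ → ℝ) (x : ℝ) : ℝ := ∫ y : ℝ, (1/2) * Real.exp (-|x - y|) * f y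

/-- `(p₊*f)(x) = (1/2)∫_{-∞}^{x} e^{y-x} f(y) dy`. -/
noncomputable def pPlus (f : ℝ → ℝ) (x : ℝ) : ℝ := (1/2) * ∫ y in Set.Iic x, Real.exp (y - x) * f y

/-- `(p₋*f)(x) = (1/2)∫_{x}^{∞} e^{x-y} f(y) dy`. -/
noncomputable def pMinus (f : ℝ → ℝ) (x : ℝ) : ℝ := (1/2) * ∫ y in Set.Ici x, Real.exp (x - y) * f y

/-!
Split the kernel at `y = x`: `p*f = p₊*f + p₋*f` with
`p₊*f (x) = ½ e^{-x} ∫_{-∞}^x e^y f(y) dy` and `p₋*f (x) = ½ e^x ∫_x^∞ e^{-y} f(y) dy`.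
The fundamental theorem of calculus gives `(p₊*f)' = f/2 - p₊*f` and
`(p₋*f)' = p₋*f - f/2`, so `(p*f)' = p₋*f - p₊*f` and `(p*f)'' = p₋*f + p₊*f - f = p*f - f`.
-/

section FundamentalTheorem

variable {E : Type*} [NormedAddCommGroup E] [NormedSpace ℝ E] [CompleteSpace E] {g : ℝ → E}

theorem hasDerivAt_setIntegral_Iic (hg : Continuous g) (hint : ∀ t, IntegrableOn g (Iic t))
    (x : ℝ) : HasDerivAt (fun t => ∫ y in Iic t, g y) (g x) x := by
  have hsplit :
      (fun t => ∫ y in Iic t, g y) = fun t => (∫ y in Iic x, g y) + ∫ y in x..t, g y := by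
    ext t
    rw [← intervalIntegral.integral_Iic_sub_Iic (hint x) (hint t), add_sub_cancel]
  rw [hsplit]
  exact (intervalIntegral.integral_hasDerivAt_right (hg.intervalIntegrable x x)
    (hg.stronglyMeasurableAtFilter _ _) hg.continuousAt).const_add _

theorem hasDerivAt_setIntegral_Ici (hg : Continuous g) (hint : ∀ t, IntegrableOn g (Ici t))
    (x : ℝ) : HasDerivAt (fun t => ∫ y in Ici t, g y) (-g x) x := by
  have hsplit :
      (fun t => ∫ y in Ici t, g y) = fun t => (∫ y in Ici x, g y) - ∫ y in x..t, g y := by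
    ext t
    rw [← intervalIntegral.integral_Ici_sub_Ici' (hint x) (hint t), sub_sub_cancel]
  rw [hsplit]
  exact (intervalIntegral.integral_hasDerivAt_right (hg.intervalIntegrable x x)
    (hg.stronglyMeasurableAtFilter _ _) hg.continuousAt).const_sub _

end FundamentalTheorem

section Convolution

variable {f : ℝ → ℝ} {C : ℝ}

theorem integrableOn_Iic_exp_mul (hf : AEStronglyMeasurable f) (hC : ∀ y, |f y| ≤ C) (c : ℝ) :
    IntegrableOn (fun y => exp y * f y) (Iic c) :=
  (integrableOn_exp_Iic c).mul_bdd hf.restrict (ae_of_all _ hC)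

theorem integrableOn_Ici_exp_neg_mul (hf : AEStronglyMeasurable f) (hC : ∀ y, |f y| ≤ C)
    (c : ℝ) : IntegrableOn (fun y => exp (-y) * f y) (Ici c) :=
  Iff.mpr integrableOn_Ici_iff_integrableOn_Ioi <|
    (integrableOn_exp_neg_Ioi c).mul_bdd hf.restrict (ae_of_all _ hC)

theorem pPlus_eq_mul_integral_Iic (f : ℝ → ℝ) (x : ℝ) :
    pPlus f x = 1 / 2 * (exp (-x) * ∫ y in Iic x, exp y * f y) := by
  rw [pPlus]
  congr 1
  rw [← integral_const_mul]
  congr 1 with y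
  rw [sub_eq_neg_add, exp_add, mul_assoc]

theorem pMinus_eq_mul_integral_Ici (f : ℝ → ℝ) (x : ℝ) :
    pMinus f x = 1 / 2 * (exp x * ∫ y in Ici x, exp (-y) * f y) := by
  rw [pMinus]
  congr 1
  rw [← integral_const_mul]
  congr 1 with y
  rw [sub_eq_add_neg, exp_add, mul_assoc]

theorem hasDerivAt_pPlus (hf : Continuous f) (hC : ∀ y, |f y| ≤ C) (x : ℝ) :
    HasDerivAt (pPlus f) (1 / 2 * f x - pPlus f x) x := by
  have hF := hasDerivAt_setIntegral_Iic (g := fun y => exp y * f y) (by fun_prop)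
    (integrableOn_Iic_exp_mul hf.aestronglyMeasurable hC) x
  rw [funext (pPlus_eq_mul_integral_Iic f)]
  refine (((hasDerivAt_neg x).exp.mul hF).const_mul (1 / 2)).congr_deriv ?_
  rw [← mul_assoc (exp (-x)), ← exp_add, neg_add_cancel, exp_zero]
  ring

theorem hasDerivAt_pMinus (hf : Continuous f) (hC : ∀ y, |f y| ≤ C) (x : ℝ) :
    HasDerivAt (pMinus f) (pMinus f x - 1 / 2 * f x) x := by
  have hG := hasDerivAt_setIntegral_Ici (g := fun y => exp (-y) * f y) (by fun_prop)
    (integrableOn_Ici_exp_neg_mul hf.aestronglyMeasurable hC) x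
  rw [funext (pMinus_eq_mul_integral_Ici f)]
  refine (((hasDerivAt_exp x).mul hG).const_mul (1 / 2)).congr_deriv ?_
  rw [mul_neg, ← mul_assoc (exp x), ← exp_add, add_neg_cancel, exp_zero]
  ring

theorem pConv_eq_pPlus_add_pMinus (hf : AEStronglyMeasurable f) (hC : ∀ y, |f y| ≤ C)
    (x : ℝ) : pConv f x = pPlus f x + pMinus f x := by
  have hle : ∀ y ∈ Iic x, 1 / 2 * exp (-|x - y|) * f y = 1 / 2 * exp (-x) * (exp y * f y) := by
    intro y hy
    rw [abs_of_nonneg (sub_nonneg.mpr hy), neg_sub, sub_eq_neg_add, exp_add]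
    ring
  have hgt : ∀ y ∈ Ioi x, 1 / 2 * exp (-|x - y|) * f y = 1 / 2 * exp x * (exp (-y) * f y) := by
    intro y hy
    rw [abs_of_neg (sub_neg.mpr hy), neg_neg, sub_eq_add_neg, exp_add]
    ring
  have hint_le : IntegrableOn (fun y => 1 / 2 * exp (-|x - y|) * f y) (Iic x) :=
    IntegrableOn.congr_fun ((integrableOn_Iic_exp_mul hf hC x).const_mul _)
      (fun y hy => (hle y hy).symm) measurableSet_Iic
  have hint_gt : IntegrableOn (fun y => 1 / 2 * exp (-|x - y|) * f y) (Ioi x) :=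
    IntegrableOn.congr_fun
      (((integrableOn_Ici_exp_neg_mul hf hC x).mono_set Ioi_subset_Ici_self).const_mul _)
      (fun y hy => (hgt y hy).symm) measurableSet_Ioi
  rw [pConv, ← intervalIntegral.integral_Iic_add_Ioi hint_le hint_gt,
    setIntegral_congr_fun measurableSet_Iic hle, setIntegral_congr_fun measurableSet_Ioi hgt,
    ← integral_Ici_eq_integral_Ioi, integral_const_mul, integral_const_mul,
    pPlus_eq_mul_integral_Iic, pMinus_eq_mul_integral_Ici]
  ring

theorem hasDerivAt_pConv (hf : Continuous f) (hC : ∀ y, |f y| ≤ C) (x : ℝ) :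
    HasDerivAt (pConv f) (pMinus f x - pPlus f x) x := by
  rw [funext (pConv_eq_pPlus_add_pMinus hf.aestronglyMeasurable hC)]
  exact ((hasDerivAt_pPlus hf hC x).add (hasDerivAt_pMinus hf hC x)).congr_deriv (by ring)

end Convolution

theorem stmt1 (f : ℝ → ℝ) (hf : Continuous f) (hb : ∃ C, ∀ x, |f x| ≤ C) :
    (∀ x : ℝ, DifferentiableAt ℝ (pConv f) x) ∧
    (∀ x : ℝ, HasDerivAt (deriv (pConv f)) (pConv f x - f x) x) := by
  obtain ⟨C, hC⟩ := hb
  have hderiv : deriv (pConv f) = fun x => pMinus f x - pPlus f x :=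
    funext fun x => (hasDerivAt_pConv hf hC x).deriv
  refine ⟨fun x => (hasDerivAt_pConv hf hC x).differentiableAt, fun x => ?_⟩
  rw [hderiv, pConv_eq_pPlus_add_pMinus hf.aestronglyMeasurable hC]
  exact ((hasDerivAt_pMinus hf hC x).sub (hasDerivAt_pPlus hf hC x)).congr_deriv (by ring)
end

section
/- Let u : ℝ × ℝ → ℝ be smooth, m = u − u_{xx}, M = cos(u² − u_x²)·m·u_x, and suppose that for all (t,x) the following three identities hold: (i) m_t + sin(u² − u_x²)·m_x = −2·m·M; (ii) u_t + sin(u² − u_x²)·u_x = −2·p*(u·M) − 2·[p₋*(u_x·M) − p₊*(u_x·M)]; (iii) u_{tx} + sin(u² − u_x²)·u_{xx} = −2·[p₋*(u·M) − p₊*(u·M)] − 2·p*(u_x·M) (convolutions in x, for each fixed t, all assumed well defined with bounded integrands). Then M_t + sin(u² − u_x²)·M_x = 4·sin(u² − u_x²)·m·u·u_x·[p*(u·M) + p₋*(u_x·M) − p₊*(u_x·M)] − 4·sin(u² − u_x²)·m·u_x²·[p₋*(u·M) − p₊*(u·M) + p*(u_x·M)] − 2·M² − 2·cos(u² − u_x²)·m·[p₋*(u·M)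 − p₊*(u·M) + p*(u_x·M)]. -/
open MeasureTheory Real Set

/-- Spatial partial derivative `∂ₓ` of a function of `(t, x)`. -/
noncomputable def pdx (f : ℝ → ℝ → ℝ) : ℝ → ℝ → ℝ := fun t x => deriv (fun y => f t y) x

/-- Time partial derivative `∂ₜ` of a function of `(t, x)`. -/
noncomputable def pdt (f : ℝ → ℝ → ℝ) : ℝ → ℝ → ℝ := fun t x => deriv (fun s => f s x) t

/-- The momentum density `m = u - u_{xx}`. -/
noncomputable def mF (u : ℝ → ℝ → ℝ) : ℝ → ℝ → ℝ := fun t x => u t x - pdx (pdx u) t x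

/-- The blow-up quantity `M = cos(u² - u_x²) · m · u_x`. -/
noncomputable def MF (u : ℝ → ℝ → ℝ) : ℝ → ℝ → ℝ :=
  fun t x => Real.cos ((u t x) ^ 2 - (pdx u t x) ^ 2) * mF u t x * pdx u t x

/-!
Write `D = ∂ₜ + sin(u² - u_x²) ∂ₓ` for the derivative along the characteristics. `D` obeys the
chain and product rules, so
`D M = -sin(u² - u_x²) (2u·Du - 2u_x·Du_x) m u_x + cos(u² - u_x²) (Dm·u_x + m·Du_x)`.
Equations (i) and (ii) give `Dm` and `Du`, and (iii) gives `Du_x` once `∂ₜ∂ₓu = ∂ₓ∂ₜu`;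
substituting the three is the claimed identity.
-/

open Function

section PartialDerivatives

variable {f : ℝ → ℝ → ℝ} {t x : ℝ}

theorem hasDerivAt_pdx (hf : DifferentiableAt ℝ (uncurry f) (t, x)) :
    HasDerivAt (fun y => f t y) (pdx f t x) x :=
  (hf.comp x ((differentiableAt_const t).prodMk differentiableAt_id)).hasDerivAt

theorem hasDerivAt_pdt (hf : DifferentiableAt ℝ (uncurry f) (t, x)) :
    HasDerivAt (fun s => f s x) (pdt f t x) t :=
  (hf.comp (f := fun s => (s, x)) t
    (differentiableAt_id.prodMk (differentiableAt_const x))).hasDerivAt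

theorem pdx_eq_fderiv (hf : DifferentiableAt ℝ (uncurry f) (t, x)) :
    pdx f t x = fderiv ℝ (uncurry f) (t, x) (0, 1) :=
  (hf.hasFDerivAt.comp_hasDerivAt x ((hasDerivAt_const x t).prodMk (hasDerivAt_id x))).deriv

theorem pdt_eq_fderiv (hf : DifferentiableAt ℝ (uncurry f) (t, x)) :
    pdt f t x = fderiv ℝ (uncurry f) (t, x) (1, 0) :=
  (hf.hasFDerivAt.comp_hasDerivAt (f := fun s => (s, x)) t
    ((hasDerivAt_id t).prodMk (hasDerivAt_const t x))).deriv

theorem uncurry_pdx_eq_fderiv (hf : Differentiable ℝ (uncurry f)) :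
    uncurry (pdx f) = fun p => fderiv ℝ (uncurry f) p (0, 1) :=
  funext fun p => pdx_eq_fderiv (hf p)

theorem uncurry_pdt_eq_fderiv (hf : Differentiable ℝ (uncurry f)) :
    uncurry (pdt f) = fun p => fderiv ℝ (uncurry f) p (1, 0) :=
  funext fun p => pdt_eq_fderiv (hf p)

variable {m n : WithTop ℕ∞}

theorem ne_zero_of_add_one_le (h : m + 1 ≤ n) : n ≠ 0 := by
  rintro rfl
  simp at h

theorem contDiff_pdx (hf : ContDiff ℝ n (uncurry f)) (hmn : m + 1 ≤ n) :
    ContDiff ℝ m (uncurry (pdx f)) := by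
  rw [uncurry_pdx_eq_fderiv (hf.differentiable (ne_zero_of_add_one_le hmn))]
  exact (hf.fderiv_right hmn).clm_apply contDiff_const

theorem contDiff_pdt (hf : ContDiff ℝ n (uncurry f)) (hmn : m + 1 ≤ n) :
    ContDiff ℝ m (uncurry (pdt f)) := by
  rw [uncurry_pdt_eq_fderiv (hf.differentiable (ne_zero_of_add_one_le hmn))]
  exact (hf.fderiv_right hmn).clm_apply contDiff_const

theorem pdt_pdx_comm (hf : ContDiff ℝ 2 (uncurry f)) : pdt (pdx f) t x = pdx (pdt f) t x := by
  have hf' : DifferentiableAt ℝ (fderiv ℝ (uncurry f)) (t, x) :=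
    (hf.fderiv_right (m := 1) le_rfl).differentiable one_ne_zero _
  rw [pdt_eq_fderiv ((contDiff_pdx hf (m := 1) le_rfl).differentiable one_ne_zero _),
    pdx_eq_fderiv ((contDiff_pdt hf (m := 1) le_rfl).differentiable one_ne_zero _),
    uncurry_pdx_eq_fderiv (hf.differentiable two_ne_zero),
    uncurry_pdt_eq_fderiv (hf.differentiable two_ne_zero),
    fderiv_clm_apply hf' (differentiableAt_const _), fderiv_clm_apply hf' (differentiableAt_const _)]
  simpa using hf.contDiffAt.isSymmSndFDerivAt (by simp) (1, 0) (0, 1)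

end PartialDerivatives

theorem HasDerivAt.cos_sq_sub_sq_mul_mul {a b c : ℝ → ℝ} {a' b' c' s : ℝ}
    (ha : HasDerivAt a a' s) (hb : HasDerivAt b b' s) (hc : HasDerivAt c c' s) :
    HasDerivAt (fun r => Real.cos (a r ^ 2 - b r ^ 2) * c r * b r)
      (-Real.sin (a s ^ 2 - b s ^ 2) * (2 * a s * a' - 2 * b s * b') * c s * b s
        + Real.cos (a s ^ 2 - b s ^ 2) * c' * b s + Real.cos (a s ^ 2 - b s ^ 2) * c s * b') s := by
  refine ((((ha.pow 2).sub (hb.pow 2)).cos.mul hc).mul hb).congr_deriv ?_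
  simp only [Pi.mul_apply, Pi.sub_apply, Pi.pow_apply]
  ring

theorem stmt9_general (u : ℝ → ℝ → ℝ) (hu : ContDiff ℝ (⊤ : ℕ∞) (Function.uncurry u))
    -- (i) m_t + sin(u² - u_x²)·m_x = -2·m·M
    (hi : ∀ t x : ℝ, pdt (mF u) t x
      + Real.sin ((u t x) ^ 2 - (pdx u t x) ^ 2) * pdx (mF u) t x
      = -2 * mF u t x * MF u t x)
    -- (ii) u_t + sin(u² - u_x²)·u_x = -2·p*(u·M) - 2·[p₋*(u_x·M) - p₊*(u_x·M)]
    (hii : ∀ t x : ℝ, pdt u t x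
      + Real.sin ((u t x) ^ 2 - (pdx u t x) ^ 2) * pdx u t x
      = -2 * pConv (fun y => u t y * MF u t y) x
        - 2 * (pMinus (fun y => pdx u t y * MF u t y) x
                - pPlus (fun y => pdx u t y * MF u t y) x))
    -- (iii) u_{tx} + sin(u² - u_x²)·u_{xx} = -2·[p₋*(u·M) - p₊*(u·M)] - 2·p*(u_x·M)
    (hiii : ∀ t x : ℝ, pdx (pdt u) t x
      + Real.sin ((u t x) ^ 2 - (pdx u t x) ^ 2) * pdx (pdx u) t x
      = -2 * (pMinus (fun y => u t y * MF u t y) x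
                - pPlus (fun y => u t y * MF u t y) x)
        - 2 * pConv (fun y => pdx u t y * MF u t y) x) :
    ∀ t x : ℝ, pdt (MF u) t x
      + Real.sin ((u t x) ^ 2 - (pdx u t x) ^ 2) * pdx (MF u) t x
      = 4 * Real.sin ((u t x) ^ 2 - (pdx u t x) ^ 2) * mF u t x * u t x * pdx u t x
          * (pConv (fun y => u t y * MF u t y) x
              + pMinus (fun y => pdx u t y * MF u t y) x
              - pPlus (fun y => pdx u t y * MF u t y) x)
        - 4 * Real.sin ((u t x) ^ 2 - (pdx u t x) ^ 2) * mF u t x * (pdx u t x) ^ 2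
          * (pMinus (fun y => u t y * MF u t y) x
              - pPlus (fun y => u t y * MF u t y) x
              + pConv (fun y => pdx u t y * MF u t y) x)
        - 2 * (MF u t x) ^ 2
        - 2 * Real.cos ((u t x) ^ 2 - (pdx u t x) ^ 2) * mF u t x
          * (pMinus (fun y => u t y * MF u t y) x
              - pPlus (fun y => u t y * MF u t y) x
              + pConv (fun y => pdx u t y * MF u t y) x) := by
  intro t x
  have hux : ContDiff ℝ (⊤ : ℕ∞) (uncurry (pdx u)) := contDiff_pdx hu (by exact_mod_cast le_top)
  have hm : ContDiff ℝ (⊤ : ℕ∞) (uncurry (mF u)) :=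
    hu.sub (contDiff_pdx hux (by exact_mod_cast le_top))
  have hu₁ := hu.differentiable (by simp) (t, x)
  have hux₁ := hux.differentiable (by simp) (t, x)
  have hm₁ := hm.differentiable (by simp) (t, x)
  have hMt : pdt (MF u) t x = _ := (HasDerivAt.cos_sq_sub_sq_mul_mul
    (hasDerivAt_pdt hu₁) (hasDerivAt_pdt hux₁) (hasDerivAt_pdt hm₁)).deriv
  have hMx : pdx (MF u) t x = _ := (HasDerivAt.cos_sq_sub_sq_mul_mul
    (hasDerivAt_pdx hu₁) (hasDerivAt_pdx hux₁) (hasDerivAt_pdx hm₁)).deriv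
  have hDm := hi t x
  have hDu := hii t x
  have hDux := hiii t x
  rw [← pdt_pdx_comm (hu.of_le (WithTop.coe_le_coe.mpr le_top))] at hDux
  have hMF : MF u t x = cos ((u t x) ^ 2 - (pdx u t x) ^ 2) * mF u t x * pdx u t x := rfl
  rw [hMF] at hDm
  rw [hMt, hMx, hMF]
  linear_combination
    (cos ((u t x) ^ 2 - (pdx u t x) ^ 2) * pdx u t x) * hDm
    + (-2 * sin ((u t x) ^ 2 - (pdx u t x) ^ 2) * mF u t x * pdx u t x * u t x) * hDu
    + (2 * sin ((u t x) ^ 2 - (pdx u t x) ^ 2) * mF u t x * pdx u t x ^ 2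
        + cos ((u t x) ^ 2 - (pdx u t x) ^ 2) * mF u t x) * hDux

theorem stmt9 (u : ℝ → ℝ → ℝ) (hu : ContDiff ℝ (⊤ : ℕ∞) (Function.uncurry u))
    (hb : ∀ t : ℝ, ∃ C : ℝ, ∀ x : ℝ,
      |u t x * MF u t x| ≤ C ∧ |pdx u t x * MF u t x| ≤ C)
    -- (i) m_t + sin(u² - u_x²)·m_x = -2·m·M
    (hi : ∀ t x : ℝ, pdt (mF u) t x
      + Real.sin ((u t x) ^ 2 - (pdx u t x) ^ 2) * pdx (mF u) t x
      = -2 * mF u t x * MF u t x)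
    -- (ii) u_t + sin(u² - u_x²)·u_x = -2·p*(u·M) - 2·[p₋*(u_x·M) - p₊*(u_x·M)]
    (hii : ∀ t x : ℝ, pdt u t x
      + Real.sin ((u t x) ^ 2 - (pdx u t x) ^ 2) * pdx u t x
      = -2 * pConv (fun y => u t y * MF u t y) x
        - 2 * (pMinus (fun y => pdx u t y * MF u t y) x
                - pPlus (fun y => pdx u t y * MF u t y) x))
    -- (iii) u_{tx} + sin(u² - u_x²)·u_{xx} = -2·[p₋*(u·M) - p₊*(u·M)] - 2·p*(u_x·M)
    (hiii : ∀ t x : ℝ, pdx (pdt u) t x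
      + Real.sin ((u t x) ^ 2 - (pdx u t x) ^ 2) * pdx (pdx u) t x
      = -2 * (pMinus (fun y => u t y * MF u t y) x
                - pPlus (fun y => u t y * MF u t y) x)
        - 2 * pConv (fun y => pdx u t y * MF u t y) x) :
    ∀ t x : ℝ, pdt (MF u) t x
      + Real.sin ((u t x) ^ 2 - (pdx u t x) ^ 2) * pdx (MF u) t x
      = 4 * Real.sin ((u t x) ^ 2 - (pdx u t x) ^ 2) * mF u t x * u t x * pdx u t x
          * (pConv (fun y => u t y * MF u t y) x
              + pMinus (fun y => pdx u t y * MF u t y) x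
              - pPlus (fun y => pdx u t y * MF u t y) x)
        - 4 * Real.sin ((u t x) ^ 2 - (pdx u t x) ^ 2) * mF u t x * (pdx u t x) ^ 2
          * (pMinus (fun y => u t y * MF u t y) x
              - pPlus (fun y => u t y * MF u t y) x
              + pConv (fun y => pdx u t y * MF u t y) x)
        - 2 * (MF u t x) ^ 2
        - 2 * Real.cos ((u t x) ^ 2 - (pdx u t x) ^ 2) * mF u t x
          * (pMinus (fun y => u t y * MF u t y) x
              - pPlus (fun y => u t y * MF u t y) x
              + pConv (fun y => pdx u t y * MF u t y) x) :=
  stmt9_general u hu hi hii hiii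
end
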